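/- Under conditions (i) and (ii) of the preceding setting, E[(‖E‖/√(Tm))⁴] ≤ (S + B)/min(T, m); consequently, by Markov's inequality, for every ε > 0, P(‖E‖/√(Tm) ≥ ε / min(T,m)^{1/4}) ≤ (S+B)/ε⁴. -/

import Mathlib

open MeasureTheory Matrix
open scoped Matrix

/-- Spectral (operator) norm of a real matrix, induced by Euclidean norms. -/
noncomputable def specNorm {T m : ℕ} (A : Matrix (Fin T) (Fin m) ℝ) : ℝ :=
  ‖(Matrix.toEuclideanLin A).toContinuousLinearMap‖

/-- Covariance of two real random variables: Cov(X,Y) = E[XY] − E[X]E[Y]. -/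
noncomputable def cov {Ω : Type*} [MeasurableSpace Ω] (μ : Measure Ω) (X Y : Ω → ℝ) : ℝ :=
  (∫ ω, X ω * Y ω ∂μ) - (∫ ω, X ω ∂μ) * (∫ ω, Y ω ∂μ)

/-!
`‖E‖⁴ = ‖E Eᵀ‖²` is at most the squared Frobenius norm `∑_{t,s} ⟨e_t, e_s⟩²` of the Gram matrix.
Expanding the square, `𝔼 ⟨e_t, e_s⟩²` is the sum of the `m²` covariances
`Cov(e_{t,i} e_{s,i}, e_{t,j} e_{s,j})`, at most `m B`, plus the squared autocovariance
`γ(s - t)²`; and `∑_{t,s} γ(s - t)² ≤ T ∑_u γ(u)² ≤ T m² S`. Hence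
`𝔼 (‖E‖ / √(T m))⁴ ≤ B / m + S / T`, and the tail bound is Markov's inequality for the fourth power.
-/

section SpectralNorm

-- Under this scoped instance `specNorm A` is definitionally the matrix norm `‖A‖`.
open scoped Matrix.Norms.L2Operator

variable {T m : ℕ}

theorem specNorm_nonneg (A : Matrix (Fin T) (Fin m) ℝ) : 0 ≤ specNorm A :=
  norm_nonneg _

theorem continuous_specNorm : Continuous (specNorm : Matrix (Fin T) (Fin m) ℝ → ℝ) :=
  continuous_norm

theorem specNorm_mul_transpose_self (A : Matrix (Fin T) (Fin m) ℝ) :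
    specNorm (A * Aᵀ) = specNorm A ^ 2 := by
  have h := l2_opNorm_conjTranspose_mul_self Aᴴ
  rw [conjTranspose_conjTranspose, l2_opNorm_conjTranspose, conjTranspose_eq_transpose_of_trivial,
    ← sq] at h
  exact h

theorem specNorm_le_sqrt_sum_sq (A : Matrix (Fin T) (Fin m) ℝ) :
    specNorm A ≤ √(∑ t, ∑ i, A t i ^ 2) := by
  refine ContinuousLinearMap.opNorm_le_bound _ (Real.sqrt_nonneg _) fun x => ?_
  rw [← sq_le_sq₀ (norm_nonneg _) (by positivity), mul_pow, Real.sq_sqrt (by positivity),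
    EuclideanSpace.norm_sq_eq, EuclideanSpace.norm_sq_eq, Finset.sum_mul]
  refine Finset.sum_le_sum fun t _ => ?_
  simpa [mulVec, dotProduct] using
    Finset.sum_mul_sq_le_sq_mul_sq Finset.univ (A t) x

theorem specNorm_pow_four_le (A : Matrix (Fin T) (Fin m) ℝ) :
    specNorm A ^ 4 ≤ ∑ t, ∑ s, (∑ i, A t i * A s i) ^ 2 := by
  calc specNorm A ^ 4 = specNorm (A * Aᵀ) ^ 2 := by rw [specNorm_mul_transpose_self]; ring
    _ ≤ √(∑ t, ∑ s, (A * Aᵀ) t s ^ 2) ^ 2 :=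
      pow_le_pow_left₀ (specNorm_nonneg _) (specNorm_le_sqrt_sum_sq _) 2
    _ = ∑ t, ∑ s, (∑ i, A t i * A s i) ^ 2 := by
      rw [Real.sq_sqrt (by positivity)]
      simp [mul_apply]

end SpectralNorm

section Moments

variable {Ω : Type*} [MeasurableSpace Ω] {μ : Measure Ω}

theorem integrable_sq_sum {ι : Type*} [Fintype ι] {X : ι → Ω → ℝ}
    (hXX : ∀ i j, Integrable (fun ω => X i ω * X j ω) μ) :
    Integrable (fun ω => (∑ i, X i ω) ^ 2) μ := by
  simp_rw [sq, Finset.sum_mul_sum]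
  exact integrable_finsetSum _ fun i _ => integrable_finsetSum _ fun j _ => hXX i j

theorem integral_sq_sum_eq_sum_cov_add_sq {ι : Type*} [Fintype ι] {X : ι → Ω → ℝ}
    (hXX : ∀ i j, Integrable (fun ω => X i ω * X j ω) μ) :
    ∫ ω, (∑ i, X i ω) ^ 2 ∂μ = ∑ i, ∑ j, cov μ (X i) (X j) + (∑ i, ∫ ω, X i ω ∂μ) ^ 2 := by
  simp_rw [sq, Finset.sum_mul_sum]
  rw [integral_finsetSum _ fun i _ => integrable_finsetSum _ fun j _ => hXX i j]
  simp_rw [integral_finsetSum _ fun j _ => hXX _ j, cov, ← Finset.sum_add_distrib]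
  simp

theorem integral_sq_sum_le {ι : Type*} [Fintype ι] {X : ι → Ω → ℝ}
    (hX : ∀ i, Integrable (X i) μ) (hXX : ∀ i j, Integrable (fun ω => X i ω * X j ω) μ) :
    ∫ ω, (∑ i, X i ω) ^ 2 ∂μ ≤ ∑ i, ∑ j, |cov μ (X i) (X j)| + (∫ ω, ∑ i, X i ω ∂μ) ^ 2 := by
  rw [integral_sq_sum_eq_sum_cov_add_sq hXX, integral_finsetSum _ fun i _ => hX i]
  gcongr with i _ j _
  exact le_abs_self _

theorem meas_ge_le_ofReal_div_pow_of_integral_pow_le [IsFiniteMeasure μ] {X : Ω → ℝ}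
    (hX : ∀ ω, 0 ≤ X ω) {n : ℕ} (hint : Integrable (fun ω => X ω ^ n) μ) {c C : ℝ}
    (hc : 0 < c) (hC : ∫ ω, X ω ^ n ∂μ ≤ C) :
    μ {ω | c ≤ X ω} ≤ ENNReal.ofReal (C / c ^ n) := by
  have hmarkov := mul_meas_ge_le_integral_of_nonneg (ae_of_all μ fun ω => pow_nonneg (hX ω) n)
    hint (c ^ n)
  have hsub : {ω | c ≤ X ω} ⊆ {ω | c ^ n ≤ X ω ^ n} :=
    fun ω hω => pow_le_pow_left₀ hc.le hω n
  calc μ {ω | c ≤ X ω} ≤ μ {ω | c ^ n ≤ X ω ^ n} := measure_mono hsub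
    _ = ENNReal.ofReal (μ.real {ω | c ^ n ≤ X ω ^ n}) :=
      (ofReal_measureReal (measure_ne_top μ _)).symm
    _ ≤ ENNReal.ofReal (C / c ^ n) := by
      gcongr
      rw [le_div_iff₀' (by positivity)]
      exact hmarkov.trans hC

end Moments

theorem sum_sum_comp_sub_le_card_mul_tsum {ι : Type*} [Fintype ι] {g : ι → ℤ}
    (hg : Function.Injective g) {f : ℤ → ℝ} (hf : ∀ u, 0 ≤ f u) (hfs : Summable f) :
    ∑ t, ∑ s, f (g s - g t) ≤ Fintype.card ι * ∑' u, f u := by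
  calc ∑ t, ∑ s, f (g s - g t) ≤ ∑ _t : ι, ∑' u, f u := by
        gcongr with t
        rw [← tsum_fintype (L := .unconditional ι)]
        exact tsum_comp_le_tsum_of_inj hfs hf fun s₁ s₂ h => hg (sub_left_injective h)
    _ = Fintype.card ι * ∑' u, f u := by simp

theorem div_add_div_le_add_div_min {S B T m : ℝ} (hS : 0 ≤ S) (hB : 0 ≤ B) (hT : 0 < T)
    (hm : 0 < m) : S / T + B / m ≤ (S + B) / min T m := by
  rw [add_div]
  gcongr
  exacts [min_le_left _ _, min_le_right _ _]

theorem div_sqrt_pow_four (x : ℝ) {a : ℝ} (ha : 0 ≤ a) : (x / √a) ^ 4 = x ^ 4 / a ^ 2 := by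
  rw [div_pow, show √a ^ 4 = (√a ^ 2) ^ 2 by ring, Real.sq_sqrt ha]

theorem div_rpow_one_div_four_pow_four (x : ℝ) {a : ℝ} (ha : 0 ≤ a) :
    (x / a ^ ((1 : ℝ) / 4)) ^ 4 = x ^ 4 / a := by
  rw [div_pow, ← Real.rpow_natCast (_ ^ _), ← Real.rpow_mul ha]
  norm_num

section StationaryErrors

variable {Ω : Type*} [MeasurableSpace Ω] {μ : Measure Ω} {m : ℕ} {e : ℤ → Fin m → Ω → ℝ}

noncomputable def autocov (μ : Measure Ω) (e : ℤ → Fin m → Ω → ℝ) (u : ℤ) : ℝ :=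
  ∫ ω, ∑ i, e 1 i ω * e (1 + u) i ω ∂μ

noncomputable def errorMatrix (T : ℕ) (e : ℤ → Fin m → Ω → ℝ) (ω : Ω) :
    Matrix (Fin T) (Fin m) ℝ :=
  Matrix.of fun t j => e ((t : ℕ) + 1) j ω

theorem integral_sq_sum_mul_le (hm : 0 < m) {B : ℝ} {t s : ℤ}
    (hint4 : ∀ i j, Integrable (fun ω => e t i ω * e s i ω * (e t j ω * e s j ω)) μ)
    (hint2 : ∀ i, Integrable (fun ω => e t i ω * e s i ω) μ)
    (hstat : ∫ ω, ∑ i, e t i ω * e s i ω ∂μ = autocov μ e (s - t))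
    (hB : (1 / (m : ℝ)) * ∑ i, ∑ j,
      |cov μ (fun ω => e t i ω * e s i ω) (fun ω => e t j ω * e s j ω)| ≤ B) :
    ∫ ω, (∑ i, e t i ω * e s i ω) ^ 2 ∂μ ≤ m * B + autocov μ e (s - t) ^ 2 := by
  rw [one_div, inv_mul_le_iff₀ (by exact_mod_cast hm)] at hB
  calc ∫ ω, (∑ i, e t i ω * e s i ω) ^ 2 ∂μ
      ≤ ∑ i, ∑ j, |cov μ (fun ω => e t i ω * e s i ω) (fun ω => e t j ω * e s j ω)|
        + (∫ ω, ∑ i, e t i ω * e s i ω ∂μ) ^ 2 := integral_sq_sum_le hint2 hint4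
    _ ≤ m * B + autocov μ e (s - t) ^ 2 := by rw [hstat]; gcongr

theorem integrable_sum_sq_gram (T : ℕ)
    (hint4 : ∀ t s : ℤ, ∀ i j : Fin m,
      Integrable (fun ω => e t i ω * e s i ω * (e t j ω * e s j ω)) μ) :
    Integrable (fun ω => ∑ t : Fin T, ∑ s : Fin T,
      (∑ i, e ((t : ℕ) + 1) i ω * e ((s : ℕ) + 1) i ω) ^ 2) μ :=
  integrable_finsetSum _ fun _ _ => integrable_finsetSum _ fun _ _ => integrable_sq_sum (hint4 _ _)

theorem integral_sum_sq_gram_le (hm : 0 < m) (T : ℕ) {S B : ℝ}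
    (hint4 : ∀ t s : ℤ, ∀ i j : Fin m,
      Integrable (fun ω => e t i ω * e s i ω * (e t j ω * e s j ω)) μ)
    (hint2 : ∀ t s : ℤ, ∀ i : Fin m, Integrable (fun ω => e t i ω * e s i ω) μ)
    (hstat : ∀ t u : ℤ, ∫ ω, ∑ i, e t i ω * e (t + u) i ω ∂μ = autocov μ e u)
    (hsum : Summable fun u => (autocov μ e u / m) ^ 2)
    (hS : ∑' u, (autocov μ e u / m) ^ 2 ≤ S)
    (hB : ∀ t s : ℤ, (1 / (m : ℝ)) * ∑ i, ∑ j,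
      |cov μ (fun ω => e t i ω * e s i ω) (fun ω => e t j ω * e s j ω)| ≤ B) :
    ∫ ω, ∑ t : Fin T, ∑ s : Fin T, (∑ i, e ((t : ℕ) + 1) i ω * e ((s : ℕ) + 1) i ω) ^ 2 ∂μ
      ≤ (T : ℝ) ^ 2 * m * B + T * m ^ 2 * S := by
  have hm' : (0 : ℝ) < m := by exact_mod_cast hm
  have hsq : ∀ u, autocov μ e u ^ 2 = m ^ 2 * (autocov μ e u / m) ^ 2 := fun u => by
    field_simp
  have hsum' : Summable fun u => autocov μ e u ^ 2 := by
    simpa only [hsq] using hsum.mul_left _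
  have hS' : ∑' u, autocov μ e u ^ 2 ≤ m ^ 2 * S := by
    rw [tsum_congr hsq, tsum_mul_left]
    gcongr
  have hg : Function.Injective fun t : Fin T => ((t : ℕ) : ℤ) + 1 := fun t₁ t₂ h => by
    simpa [Fin.ext_iff] using h
  rw [integral_finsetSum _ fun t _ => integrable_finsetSum _ fun s _ =>
    integrable_sq_sum (hint4 _ _)]
  calc ∑ t : Fin T, ∫ ω, ∑ s : Fin T,
        (∑ i, e ((t : ℕ) + 1) i ω * e ((s : ℕ) + 1) i ω) ^ 2 ∂μ
      ≤ ∑ t : Fin T, ∑ s : Fin T,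
        (m * B + autocov μ e ((((s : ℕ) : ℤ) + 1) - (((t : ℕ) : ℤ) + 1)) ^ 2) := by
        gcongr with t _
        rw [integral_finsetSum _ fun s _ => integrable_sq_sum (hint4 _ _)]
        gcongr with s _
        exact integral_sq_sum_mul_le hm (hint4 _ _) (hint2 _ _)
          (by rw [← hstat (((t : ℕ) : ℤ) + 1), add_sub_cancel]) (hB _ _)
    _ ≤ T ^ 2 * m * B + T * (m ^ 2 * S) := by
        simp only [Finset.sum_add_distrib, Finset.sum_const, Finset.card_univ, Fintype.card_fin,
          nsmul_eq_mul]
        have := sum_sum_comp_sub_le_card_mul_tsum hg (fun u => sq_nonneg _) hsum'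
        rw [Fintype.card_fin] at this
        nlinarith [mul_le_mul_of_nonneg_left hS' (Nat.cast_nonneg T)]
    _ = T ^ 2 * m * B + T * m ^ 2 * S := by ring

theorem integrable_specNorm_errorMatrix_pow_four (T : ℕ) (hmeas : ∀ t i, Measurable (e t i))
    (hint4 : ∀ t s : ℤ, ∀ i j : Fin m,
      Integrable (fun ω => e t i ω * e s i ω * (e t j ω * e s j ω)) μ) :
    Integrable (fun ω => specNorm (errorMatrix T e ω) ^ 4) μ := by
  have hmeas' : Measurable fun ω => specNorm (errorMatrix T e ω) :=
    (show Continuous fun A : Fin T → Fin m → ℝ => specNorm (Matrix.of A) from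
      continuous_specNorm).measurable.comp
        (measurable_pi_lambda _ fun _ => measurable_pi_lambda _ fun _ => hmeas _ _)
  refine (integrable_sum_sq_gram T hint4).mono' (hmeas'.pow_const 4).aestronglyMeasurable
    (ae_of_all _ fun ω => ?_)
  rw [Real.norm_of_nonneg (pow_nonneg (specNorm_nonneg _) 4)]
  exact specNorm_pow_four_le _

theorem integral_specNorm_errorMatrix_pow_four_le (hm : 0 < m) (T : ℕ) {S B : ℝ}
    (hint4 : ∀ t s : ℤ, ∀ i j : Fin m,
      Integrable (fun ω => e t i ω * e s i ω * (e t j ω * e s j ω)) μ)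
    (hint2 : ∀ t s : ℤ, ∀ i : Fin m, Integrable (fun ω => e t i ω * e s i ω) μ)
    (hstat : ∀ t u : ℤ, ∫ ω, ∑ i, e t i ω * e (t + u) i ω ∂μ = autocov μ e u)
    (hsum : Summable fun u => (autocov μ e u / m) ^ 2)
    (hS : ∑' u, (autocov μ e u / m) ^ 2 ≤ S)
    (hB : ∀ t s : ℤ, (1 / (m : ℝ)) * ∑ i, ∑ j,
      |cov μ (fun ω => e t i ω * e s i ω) (fun ω => e t j ω * e s j ω)| ≤ B) :
    ∫ ω, specNorm (errorMatrix T e ω) ^ 4 ∂μ ≤ (T : ℝ) ^ 2 * m * B + T * m ^ 2 * S :=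
  (integral_mono_of_nonneg (ae_of_all _ fun _ => pow_nonneg (specNorm_nonneg _) 4)
    (integrable_sum_sq_gram T hint4) (ae_of_all _ fun _ => specNorm_pow_four_le _)).trans
    (integral_sum_sq_gram_le hm T hint4 hint2 hstat hsum hS hB)

end StationaryErrors

theorem stmt8_general {Ω : Type*} [MeasurableSpace Ω] (μ : Measure Ω) [IsProbabilityMeasure μ]
    {m : ℕ} (hm : 0 < m) (T : ℕ) (hT : 0 < T) (e : ℤ → Fin m → Ω → ℝ)
    (hmeas : ∀ t i, Measurable (e t i))
    (hint4 : ∀ t s : ℤ, ∀ i j : Fin m,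
      Integrable (fun ω => e t i ω * e s i ω * (e t j ω * e s j ω)) μ)
    (hint2 : ∀ t s : ℤ, ∀ i : Fin m, Integrable (fun ω => e t i ω * e s i ω) μ)
    (hstat : ∀ t u : ℤ, (∫ ω, ∑ i : Fin m, e t i ω * e (t + u) i ω ∂μ) =
      ∫ ω, ∑ i : Fin m, e 1 i ω * e (1 + u) i ω ∂μ)
    (S B : ℝ)
    (hsum : Summable (fun u : ℤ =>
      ((∫ ω, ∑ i : Fin m, e 1 i ω * e (1 + u) i ω ∂μ) / m) ^ 2))
    (hS : (∑' u : ℤ, ((∫ ω, ∑ i : Fin m, e 1 i ω * e (1 + u) i ω ∂μ) / m) ^ 2) ≤ S)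
    (hB : ∀ t s : ℤ, (1 / (m : ℝ)) * ∑ i : Fin m, ∑ j : Fin m,
      |cov μ (fun ω => e t i ω * e s i ω) (fun ω => e t j ω * e s j ω)| ≤ B) :
    (∫ ω, (specNorm (Matrix.of fun (t : Fin T) (j : Fin m) => e ((t : ℕ) + 1) j ω) /
        Real.sqrt ((T : ℝ) * m)) ^ 4 ∂μ) ≤ (S + B) / (min (T : ℝ) m) ∧
    ∀ ε : ℝ, 0 < ε →
      μ {ω | ε / (min (T : ℝ) m) ^ ((1 : ℝ) / 4) ≤
          specNorm (Matrix.of fun (t : Fin T) (j : Fin m) => e ((t : ℕ) + 1) j ω) /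
            Real.sqrt ((T : ℝ) * m)} ≤ ENNReal.ofReal ((S + B) / ε ^ 4) := by
  have hm' : (0 : ℝ) < m := by exact_mod_cast hm
  have hT' : (0 : ℝ) < T := by exact_mod_cast hT
  have hmin : 0 < min (T : ℝ) m := lt_min hT' hm'
  have hscale : ∀ ω, (specNorm (errorMatrix T e ω) / √((T : ℝ) * m)) ^ 4
      = specNorm (errorMatrix T e ω) ^ 4 / ((T : ℝ) * m) ^ 2 := fun ω =>
    div_sqrt_pow_four _ (by positivity)
  have hmoment : ∫ ω, (specNorm (errorMatrix T e ω) / √((T : ℝ) * m)) ^ 4 ∂μ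
      ≤ (S + B) / min (T : ℝ) m := calc
    _ = (∫ ω, specNorm (errorMatrix T e ω) ^ 4 ∂μ) / ((T : ℝ) * m) ^ 2 := by
        simp_rw [hscale]
        exact integral_div _ _
    _ ≤ ((T : ℝ) ^ 2 * m * B + T * m ^ 2 * S) / ((T : ℝ) * m) ^ 2 := by
        gcongr
        exact integral_specNorm_errorMatrix_pow_four_le hm T hint4 hint2 hstat hsum hS hB
    _ = S / T + B / m := by field_simp; ring
    _ ≤ (S + B) / min (T : ℝ) m :=
        div_add_div_le_add_div_min ((tsum_nonneg fun _ => sq_nonneg _).trans hS)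
          ((hB 0 0).trans' (by positivity)) hT' hm'
  refine ⟨hmoment, fun ε hε => ?_⟩
  have hmarkov := meas_ge_le_ofReal_div_pow_of_integral_pow_le
    (X := fun ω => specNorm (errorMatrix T e ω) / √((T : ℝ) * m))
    (fun ω => div_nonneg (specNorm_nonneg _) (Real.sqrt_nonneg _))
    (by simpa only [hscale] using
      (integrable_specNorm_errorMatrix_pow_four T hmeas hint4).div_const (((T : ℝ) * m) ^ 2))
    (div_pos hε (Real.rpow_pos_of_pos hmin ((1 : ℝ) / 4))) hmoment
  rwa [div_rpow_one_div_four_pow_four ε hmin.le, div_div_div_cancel_right₀ hmin.ne'] at hmarkov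

/-- Lemma 1 of the paper, expectation form: under second-order stationarity, mean zero,
the autocovariance summability bound S and the fourth-cumulant bound B, the matrix E with
rows e_tᵀ satisfies E[(‖E‖/√(Tm))⁴] ≤ (S+B)/min(T,m), and by Markov's inequality,
P(‖E‖/√(Tm) ≥ ε·min(T,m)^{-1/4}) ≤ (S+B)/ε⁴ for every ε > 0. -/
theorem stmt8 {Ω : Type*} [MeasurableSpace Ω] (μ : Measure Ω) [IsProbabilityMeasure μ]
    {m : ℕ} (hm : 0 < m) (T : ℕ) (hT : 0 < T) (e : ℤ → Fin m → Ω → ℝ)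
    (hmeas : ∀ t i, Measurable (e t i))
    (hint4 : ∀ t s : ℤ, ∀ i j : Fin m,
      Integrable (fun ω => e t i ω * e s i ω * (e t j ω * e s j ω)) μ)
    (hint2 : ∀ t s : ℤ, ∀ i : Fin m, Integrable (fun ω => e t i ω * e s i ω) μ)
    (hmean : ∀ t : ℤ, ∀ i : Fin m, (∫ ω, e t i ω ∂μ) = 0)
    (hstat : ∀ t u : ℤ, (∫ ω, ∑ i : Fin m, e t i ω * e (t + u) i ω ∂μ) =
      ∫ ω, ∑ i : Fin m, e 1 i ω * e (1 + u) i ω ∂μ)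
    (S B : ℝ)
    (hsum : Summable (fun u : ℤ =>
      ((∫ ω, ∑ i : Fin m, e 1 i ω * e (1 + u) i ω ∂μ) / m) ^ 2))
    (hS : (∑' u : ℤ, ((∫ ω, ∑ i : Fin m, e 1 i ω * e (1 + u) i ω ∂μ) / m) ^ 2) ≤ S)
    (hB : ∀ t s : ℤ, (1 / (m : ℝ)) * ∑ i : Fin m, ∑ j : Fin m,
      |cov μ (fun ω => e t i ω * e s i ω) (fun ω => e t j ω * e s j ω)| ≤ B) :
    (∫ ω, (specNorm (Matrix.of fun (t : Fin T) (j : Fin m) => e ((t : ℕ) + 1) j ω) /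
        Real.sqrt ((T : ℝ) * m)) ^ 4 ∂μ) ≤ (S + B) / (min (T : ℝ) m) ∧
    ∀ ε : ℝ, 0 < ε →
      μ {ω | ε / (min (T : ℝ) m) ^ ((1 : ℝ) / 4) ≤
          specNorm (Matrix.of fun (t : Fin T) (j : Fin m) => e ((t : ℕ) + 1) j ω) /
            Real.sqrt ((T : ℝ) * m)} ≤ ENNReal.ofReal ((S + B) / ε ^ 4) :=
  stmt8_general μ hm T hT e hmeas hint4 hint2 hstat S B hsum hS hB
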